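/- arXiv:2201.12312 — 4 statements merged into one kernel-verified Lean document; each statement's English description precedes it below -/
import Mathlib

section
/- The automorphism group of a finite tournament has odd order. -/
/-- The automorphism group of a tournament (digraph with relation `r`):
permutations preserving the arc relation. -/
def tournAut {V : Type*} (r : V → V → Prop) : Subgroup (Equiv.Perm V) where
  carrier := {σ | ∀ u v, r (σ u) (σ v) ↔ r u v}
  one_mem' := fun _ _ => Iff.rfl
  mul_mem' := by
    intro a b ha hb u v
    simpa using (ha (b u) (b v)).trans (hb u v)
  inv_mem' := by
    intro a ha u v
    simpa using (ha (a⁻¹ u) (a⁻¹ v)).symm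

/-- The automorphism group of a finite tournament has odd order. -/
theorem stmt0 {V : Type*} [Fintype V] (r : V → V → Prop)
    (hirr : ∀ v, ¬ r v v)
    (htot : ∀ u v : V, u ≠ v → (r u v ↔ ¬ r v u)) :
    Odd (Nat.card (tournAut r)) := by
  rw [← Nat.not_even_iff_odd]
  intro heven
  have : Finite V := inferInstance
  obtain ⟨g, hg⟩ := exists_prime_orderOf_dvd_card' (G := tournAut r) 2
    (even_iff_two_dvd.mp heven)
  have hg1 : g ≠ 1 := by
    intro h
    rw [h, orderOf_one] at hg
    norm_num at hg
  have hsq : g * g = 1 := by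
    have := pow_orderOf_eq_one g
    rw [hg] at this
    simpa [sq] using this
  -- find a point moved by g
  obtain ⟨u, hu⟩ : ∃ u : V, (g : Equiv.Perm V) u ≠ u := by
    by_contra h
    push_neg at h
    apply hg1
    ext v
    exact h v
  set v := (g : Equiv.Perm V) u with hv
  have hgv : (g : Equiv.Perm V) v = u := by
    have : ((g * g : tournAut r) : Equiv.Perm V) u = u := by
      rw [hsq]; rfl
    simpa [hv] using this
  have hne : u ≠ v := fun h => hu h.symm
  have : r v u ↔ r u v := by
    have := g.2 u v
    simpa [← hv, hgv] using this
  rcases Classical.em (r u v) with h | h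
  · exact ((htot u v hne).mp h) (this.mpr h)
  · have hvu : r v u := by
      by_contra h2
      exact h ((htot u v hne).mpr h2)
    exact h (this.mp hvu)
end

section
/- Every tournament on n vertices contains a transitive subtournament on at least ⌊log₂ n⌋ + 1 vertices; in particular, on at least log₂ n vertices. -/
lemma insert_trans_source {V : Type*} [DecidableEq V] (r : V → V → Prop)
    (hirr : ∀ v, ¬ r v v)
    (htot : ∀ u v : V, u ≠ v → (r u v ↔ ¬ r v u))
    (v : V) (s' : Finset V) (hvs' : v ∉ s')
    (memA : ∀ y ∈ s', r v y)
    (htr : ∀ u ∈ s', ∀ x ∈ s', ∀ w ∈ s', r u x → r x w → r u w) :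
    ∀ u ∈ insert v s', ∀ x ∈ insert v s', ∀ w ∈ insert v s',
      r u x → r x w → r u w := by
  have nev : ∀ y ∈ s', y ≠ v := fun y hy h => hvs' (h ▸ hy)
  intro u hu x hx w hw hux hxw
  rcases Finset.mem_insert.1 hu with hu | hu
  · rcases Finset.mem_insert.1 hw with hw | hw
    · exfalso
      rcases Finset.mem_insert.1 hx with hx | hx
      · rw [hu, hx] at hux; exact hirr v hux
      · exact ((htot x v (nev x hx)).1 (hw ▸ hxw)) (memA x hx)
    · exact hu ▸ memA w hw
  · rcases Finset.mem_insert.1 hx with hx | hx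
    · exact absurd ((htot u v (nev u hu)).1 (hx ▸ hux)) (not_not_intro (memA u hu))
    · rcases Finset.mem_insert.1 hw with hw | hw
      · exact absurd ((htot x v (nev x hx)).1 (hw ▸ hxw)) (not_not_intro (memA x hx))
      · exact htr u hu x hx w hw hux hxw

lemma insert_trans_sink {V : Type*} [DecidableEq V] (r : V → V → Prop)
    (hirr : ∀ v, ¬ r v v)
    (htot : ∀ u v : V, u ≠ v → (r u v ↔ ¬ r v u))
    (v : V) (s' : Finset V) (hvs' : v ∉ s')
    (memB : ∀ y ∈ s', r y v)
    (htr : ∀ u ∈ s', ∀ x ∈ s', ∀ w ∈ s', r u x → r x w → r u w) :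
    ∀ u ∈ insert v s', ∀ x ∈ insert v s', ∀ w ∈ insert v s',
      r u x → r x w → r u w := by
  have nev : ∀ y ∈ s', y ≠ v := fun y hy h => hvs' (h ▸ hy)
  intro u hu x hx w hw hux hxw
  rcases Finset.mem_insert.1 hu with hu | hu
  · exfalso
    rcases Finset.mem_insert.1 hx with hx | hx
    · rw [hu, hx] at hux; exact hirr v hux
    · exact ((htot v x (Ne.symm (nev x hx))).1 (hu ▸ hux)) (memB x hx)
  · rcases Finset.mem_insert.1 hw with hw | hw
    · exact hw ▸ memB u hu
    · rcases Finset.mem_insert.1 hx with hx | hx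
      · exact absurd ((htot v w (Ne.symm (nev w hw))).1 (hx ▸ hxw))
          (not_not_intro (memB w hw))
      · exact htr u hu x hx w hw hux hxw

lemma tourn_aux {V : Type*} (r : V → V → Prop)
    (hirr : ∀ v, ¬ r v v)
    (htot : ∀ u v : V, u ≠ v → (r u v ↔ ¬ r v u)) :
    ∀ n : ℕ, ∀ t : Finset V, t.card = n → t.Nonempty →
      ∃ s : Finset V, s ⊆ t ∧ Nat.log 2 n + 1 ≤ s.card ∧
        ∀ u ∈ s, ∀ v ∈ s, ∀ w ∈ s, r u v → r v w → r u w := by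
  classical
  intro n
  induction n using Nat.strong_induction_on with
  | _ n ih =>
    intro t hcard hne
    obtain ⟨v, hv⟩ := hne
    rcases Nat.lt_or_ge n 2 with h2 | h2
    · -- n ≤ 1
      refine ⟨{v}, by simpa using hv, ?_, ?_⟩
      · have : Nat.log 2 n = 0 := Nat.log_eq_zero_iff.2 (Or.inl h2)
        simp [this]
      · intro u hu x hx w hw hux hxw
        simp only [Finset.mem_singleton] at hu hx hw
        rw [hu, hx] at hux
        exact absurd hux (hirr v)
    · -- n ≥ 2
      set A := t.filter (fun u => r v u) with hA
      set B := t.filter (fun u => u ≠ v ∧ r u v) with hB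
      have hvA : v ∉ A := by simp [hA, hirr v]
      have hvB : v ∉ B := by simp [hB]
      have hdisj : Disjoint A B := by
        rw [Finset.disjoint_left]
        intro u huA huB
        simp only [hA, hB, Finset.mem_filter] at huA huB
        exact ((htot u v huB.2.1).1 huB.2.2) huA.2
      have hcover : insert v (A ∪ B) = t := by
        apply Finset.Subset.antisymm
        · intro u hu
          simp only [Finset.mem_insert, Finset.mem_union, hA, hB,
            Finset.mem_filter] at hu
          rcases hu with h | ⟨h, _⟩ | ⟨h, _⟩
          · exact h ▸ hv
          · exact h
          · exact h
        · intro u hu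
          simp only [Finset.mem_insert, Finset.mem_union, hA, hB,
            Finset.mem_filter]
          by_cases huv : u = v
          · exact Or.inl huv
          · by_cases hr : r v u
            · exact Or.inr (Or.inl ⟨hu, hr⟩)
            · exact Or.inr (Or.inr ⟨hu, huv,
                ((htot v u (Ne.symm huv)).not_left).1 hr⟩)
      have hcards : A.card + B.card + 1 = n := by
        have h1 : (A ∪ B).card = A.card + B.card := Finset.card_union_of_disjoint hdisj
        have h2 : v ∉ A ∪ B := by simp [hvA, hvB]
        rw [← hcard, ← hcover, Finset.card_insert_of_notMem h2, h1]
      have hmax : n / 2 ≤ A.card ∨ n / 2 ≤ B.card := by omega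
      have hlog : Nat.log 2 (n / 2) + 1 = Nat.log 2 n := by
        have h0 := Nat.log_div_base 2 n
        have h1 : 0 < Nat.log 2 n := Nat.log_pos (b := 2) (by norm_num) h2
        omega
      have key : ∀ C : Finset V, n / 2 ≤ C.card → C ⊆ t → v ∉ C →
          ∃ s' : Finset V, s' ⊆ C ∧ Nat.log 2 n ≤ s'.card ∧
            ∀ u ∈ s', ∀ x ∈ s', ∀ w ∈ s', r u x → r x w → r u w := by
        intro C hC hCt hvC
        have hClt : C.card < n := by
          have hsub : C ⊆ t.erase v := fun u hu =>
            Finset.mem_erase.2 ⟨fun h => hvC (h ▸ hu), hCt hu⟩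
          have := Finset.card_le_card hsub
          rw [Finset.card_erase_of_mem hv, hcard] at this
          omega
        have hCne : C.Nonempty := Finset.card_pos.1 (by omega)
        obtain ⟨s', hs'C, hs'card, hs'tr⟩ := ih C.card hClt C rfl hCne
        refine ⟨s', hs'C, ?_, hs'tr⟩
        have : Nat.log 2 (n / 2) ≤ Nat.log 2 C.card := Nat.log_mono_right hC
        omega
      rcases hmax with hbig | hbig
      · obtain ⟨s', hs'A, hs'card, hs'tr⟩ := key A hbig (Finset.filter_subset _ _) hvA
        have hvs' : v ∉ s' := fun h => hvA (hs'A h)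
        refine ⟨insert v s', ?_, ?_, ?_⟩
        · intro u hu
          rcases Finset.mem_insert.1 hu with h | h
          · exact h ▸ hv
          · exact Finset.filter_subset _ _ (hs'A h)
        · rw [Finset.card_insert_of_notMem hvs']; omega
        · exact insert_trans_source r hirr htot v s' hvs'
            (fun y hy => (Finset.mem_filter.1 (hs'A hy)).2) hs'tr
      · obtain ⟨s', hs'B, hs'card, hs'tr⟩ := key B hbig (Finset.filter_subset _ _) hvB
        have hvs' : v ∉ s' := fun h => hvB (hs'B h)
        refine ⟨insert v s', ?_, ?_, ?_⟩
        · intro u hu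
          rcases Finset.mem_insert.1 hu with h | h
          · exact h ▸ hv
          · exact Finset.filter_subset _ _ (hs'B h)
        · rw [Finset.card_insert_of_notMem hvs']; omega
        · exact insert_trans_sink r hirr htot v s' hvs'
            (fun y hy => (Finset.mem_filter.1 (hs'B hy)).2.2) hs'tr

/-- Every tournament on `n ≥ 1` vertices contains a transitive subtournament
on at least `⌊log₂ n⌋ + 1` vertices. -/
theorem stmt2 {V : Type*} [Fintype V] (n : ℕ) (hn : Fintype.card V = n) (hpos : 0 < n)
    (r : V → V → Prop)
    (hirr : ∀ v, ¬ r v v)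
    (htot : ∀ u v : V, u ≠ v → (r u v ↔ ¬ r v u)) :
    ∃ s : Finset V, Nat.log 2 n + 1 ≤ s.card ∧
      ∀ u ∈ s, ∀ v ∈ s, ∀ w ∈ s, r u v → r v w → r u w := by
  have hne : (Finset.univ : Finset V).Nonempty := by
    rw [← Finset.card_pos, Finset.card_univ, hn]; exact hpos
  obtain ⟨s, _, h1, h2⟩ := tourn_aux r hirr htot n Finset.univ (by rw [Finset.card_univ, hn]) hne
  exact ⟨s, h1, h2⟩
end

section
/- Let Γ be a finite set, D_γ finite sets for γ ∈ Γ, and H_{γ,γ'} nonempty sets of bijections D_γ → D_{γ'} satisfying H_{γ,γ'} ∘ H_{γ',γ''} = H_{γ,γ''}. Let D = {(γ, δ) : γ ∈ Γ, δ ∈ D_γ} and let K be a subgroup of Sym(Γ). For g ∈ K and a system F = (f_{γ,γ^g})_{γ∈Γ} with f_{γ,γ^g} ∈ H_{γ,γ^g}, define f_F : D → D by (γ,δ) ↦ (γ^g, δ^{f_{γ,γ^g}}). Then the set W of all such f_F (over all g ∈ K and all systems F) is a subgroup of Sym(D). -/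
/-!
Applying `f_{F'}` (for `g'`) and then `f_F` (for `g`) gives the map for `g g'` whose component at
`γ` is `f'_γ` followed by `f_{γ^{g'}}`, which lies in `H` by the composition condition. So `W` is a
nonempty subset of the finite group `Sym(D)` closed under composition, hence a subgroup: every
element has finite order, so inverses are positive powers.
-/

open Equiv

theorem Subgroup.exists_coe_eq_of_mul_mem_of_finite {G : Type*} [Group G] [Finite G]
    {s : Set G} (hne : s.Nonempty) (hmul : ∀ a ∈ s, ∀ b ∈ s, a * b ∈ s) :
    ∃ S : Subgroup G, (S : Set G) = s := by
  obtain ⟨x, hx⟩ := hne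
  have pow_succ_mem : ∀ n : ℕ, x ^ (n + 1) ∈ s := by
    intro n
    induction n with
    | zero => simpa using hx
    | succ n ih => rw [pow_succ]; exact hmul _ ih _ hx
  have one_mem : (1 : G) ∈ s := by
    simpa [Nat.sub_add_cancel (orderOf_pos x)] using pow_succ_mem (orderOf x - 1)
  let M : Submonoid G := ⟨⟨s, fun ha hb => hmul _ ha _ hb⟩, one_mem⟩
  refine ⟨Subgroup.closure s, ?_⟩
  rw [← Subgroup.coe_toSubmonoid, Subgroup.closure_toSubmonoid_of_finite]
  exact congrArg SetLike.coe M.closure_eq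

section SigmaLifts

variable {Γ : Type*} {D : Γ → Type*}

/-- The set `W` of all `f_F`. -/
def sigmaLifts (K : Subgroup (Perm Γ)) (H : ∀ γ γ' : Γ, Set (D γ ≃ D γ')) :
    Set (Perm (Σ γ, D γ)) :=
  {w | ∃ g ∈ K, ∃ F : ∀ γ, D γ ≃ D (g γ),
    (∀ γ, F γ ∈ H γ (g γ)) ∧ ∀ (γ : Γ) (δ : D γ), w ⟨γ, δ⟩ = ⟨g γ, F γ δ⟩}

variable {K : Subgroup (Perm Γ)} {H : ∀ γ γ' : Γ, Set (D γ ≃ D γ')}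

theorem sigmaLifts_nonempty (hne : ∀ γ, (H γ γ).Nonempty) : (sigmaLifts K H).Nonempty :=
  ⟨sigmaCongrRight fun γ => (hne γ).some, 1, K.one_mem, fun γ => (hne γ).some,
    fun γ => (hne γ).some_mem, fun _ _ => rfl⟩

theorem mul_mem_sigmaLifts
    (htrans : ∀ {γ γ' γ''} {ψ : D γ ≃ D γ'} {ρ : D γ' ≃ D γ''},
      ψ ∈ H γ γ' → ρ ∈ H γ' γ'' → ψ.trans ρ ∈ H γ γ'')
    {w₁ w₂ : Perm (Σ γ, D γ)} (hw₁ : w₁ ∈ sigmaLifts K H) (hw₂ : w₂ ∈ sigmaLifts K H) :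
    w₁ * w₂ ∈ sigmaLifts K H := by
  obtain ⟨g₁, hg₁, F₁, hF₁, hw₁⟩ := hw₁
  obtain ⟨g₂, hg₂, F₂, hF₂, hw₂⟩ := hw₂
  refine ⟨g₁ * g₂, K.mul_mem hg₁ hg₂, fun γ => (F₂ γ).trans (F₁ (g₂ γ)),
    fun γ => htrans (hF₂ γ) (hF₁ (g₂ γ)), fun γ δ => ?_⟩
  rw [Perm.mul_apply, hw₂, hw₁]
  rfl

end SigmaLifts

/-- With nonempty composing sets of bijections `H γ γ'` and `K ≤ Sym(Γ)`,
the set `W` of all maps `f_F : (γ, δ) ↦ (γ^g, δ^{f_{γ,γ^g}})` is a subgroup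
of the symmetric group on `D = {(γ, δ) : δ ∈ D γ}`. -/
theorem stmt7 {Γ : Type*} [Finite Γ] (D : Γ → Type*) [∀ γ, Finite (D γ)]
    (H : ∀ γ γ' : Γ, Set (D γ ≃ D γ'))
    (hne : ∀ γ γ', (H γ γ').Nonempty)
    (hcomp : ∀ γ γ' γ'' : Γ,
      {e : D γ ≃ D γ'' | ∃ ψ ∈ H γ γ', ∃ ρ ∈ H γ' γ'', e = ψ.trans ρ} = H γ γ'')
    (K : Subgroup (Equiv.Perm Γ)) :
    ∃ S : Subgroup (Equiv.Perm (Σ γ, D γ)),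
      ∀ w : Equiv.Perm (Σ γ, D γ),
        w ∈ S ↔ ∃ g ∈ K, ∃ F : ∀ γ, D γ ≃ D (g γ),
          (∀ γ, F γ ∈ H γ (g γ)) ∧ ∀ (γ : Γ) (δ : D γ), w ⟨γ, δ⟩ = ⟨g γ, F γ δ⟩ := by
  have htrans {γ γ' γ''} {ψ : D γ ≃ D γ'} {ρ : D γ' ≃ D γ''}
      (hψ : ψ ∈ H γ γ') (hρ : ρ ∈ H γ' γ'') : ψ.trans ρ ∈ H γ γ'' :=
    hcomp γ γ' γ'' ▸ ⟨ψ, hψ, ρ, hρ, rfl⟩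
  obtain ⟨S, hS⟩ := Subgroup.exists_coe_eq_of_mul_mem_of_finite
    (sigmaLifts_nonempty (K := K) (H := H) fun γ => hne γ γ)
    fun _ h₁ _ h₂ => mul_mem_sigmaLifts (H := H) htrans h₁ h₂
  exact ⟨S, fun w => (Set.ext_iff.mp hS w :)⟩
end

section
/- In the reduction construction: let T_β be the colored tournament built from colored tournaments X (on Ω, with marked vertex α), Y (on Δ), and a copy X' of X (on Ω', with α' the copy of α), with a new apex vertex μ, cross arcs (Ω × Δ) ∪ (Δ × Ω') ∪ (Ω' × Ω) in one new color, arcs from μ in two new color classes where {(μ,α), (μ,β), (μ,α')} is one class, and vertex/arc colors inside Ω, Δ, Ω' inherited. Then X and Y are isomorphic as colored tournaments if and only if there exist β ∈ Δ and an automorphism f of T_β with α^f = β, β^f = α', and (α')^f = α. -/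
/-- Vertex set of the tournament `T_β`: `Ω ⊕ Δ ⊕ Ω' ⊕ {μ}`. -/
abbrev TV (Ω Δ : Type*) := Ω ⊕ Δ ⊕ Ω ⊕ PUnit

/-- The arc relation of `T_β`. -/
def Tarc {Ω Δ : Type*} (rX : Ω → Ω → Prop) (rY : Δ → Δ → Prop) :
    TV Ω Δ → TV Ω Δ → Prop
  | .inl x, .inl y => rX x y
  | .inl _, .inr (.inl _) => True
  | .inl _, .inr (.inr _) => False
  | .inr (.inl _), .inl _ => False
  | .inr (.inl x), .inr (.inl y) => rY x y
  | .inr (.inl _), .inr (.inr (.inl _)) => True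
  | .inr (.inl _), .inr (.inr (.inr _)) => False
  | .inr (.inr (.inl _)), .inl _ => True
  | .inr (.inr (.inl _)), .inr (.inl _) => False
  | .inr (.inr (.inl x)), .inr (.inr (.inl y)) => rX x y
  | .inr (.inr (.inl _)), .inr (.inr (.inr _)) => False
  | .inr (.inr (.inr _)), .inr (.inr (.inr _)) => False
  | .inr (.inr (.inr _)), _ => True

/-- Vertex coloring of `T_β`: `Ω` and `Ω'` inherit colors from `X`, `Δ`
inherits colors from `Y`, and `μ` gets a new color. -/
def TvCol {Ω Δ JV : Type*} (vX : Ω → JV) (vY : Δ → JV) : TV Ω Δ → Option JV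
  | .inl x => some (vX x)
  | .inr (.inl y) => some (vY y)
  | .inr (.inr (.inl x)) => some (vX x)
  | .inr (.inr (.inr _)) => none

/-- Arc coloring of `T_β`: interior arcs inherit colors, the cross arcs get
a new color `0`, the arcs `(μ,α), (μ,β), (μ,α')` get a new color `1`, and
the remaining arcs from `μ` get a new color `2`. -/
def TaCol {Ω Δ C : Type*} [DecidableEq Ω] [DecidableEq Δ]
    (cX : Ω → Ω → C) (cY : Δ → Δ → C) (α : Ω) (β : Δ) :
    TV Ω Δ → TV Ω Δ → C ⊕ Fin 3
  | .inl x, .inl y => .inl (cX x y)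
  | .inr (.inl x), .inr (.inl y) => .inl (cY x y)
  | .inr (.inr (.inl x)), .inr (.inr (.inl y)) => .inl (cX x y)
  | .inr (.inr (.inr _)), .inl x => if x = α then .inr 1 else .inr 2
  | .inr (.inr (.inr _)), .inr (.inl y) => if y = β then .inr 1 else .inr 2
  | .inr (.inr (.inr _)), .inr (.inr (.inl x)) => if x = α then .inr 1 else .inr 2
  | _, _ => .inr 0

/-- `X` and `Y` are isomorphic as colored tournaments iff for some `β ∈ Δ`
the colored tournament `T_β` has an automorphism `f` with `α^f = β`,
`β^f = α'`, `(α')^f = α`. -/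
theorem stmt16 {Ω Δ JV C : Type*} [Fintype Ω] [Fintype Δ]
    [DecidableEq Ω] [DecidableEq Δ] (n : ℕ)
    (hΩ : Fintype.card Ω = n) (hΔ : Fintype.card Δ = n)
    (rX : Ω → Ω → Prop) (rY : Δ → Δ → Prop)
    (hirrX : ∀ v, ¬ rX v v) (htotX : ∀ u v, u ≠ v → (rX u v ↔ ¬ rX v u))
    (hirrY : ∀ v, ¬ rY v v) (htotY : ∀ u v, u ≠ v → (rY u v ↔ ¬ rY v u))
    (vX : Ω → JV) (vY : Δ → JV)
    (cX : Ω → Ω → C) (cY : Δ → Δ → C)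
    (α : Ω) :
    (∃ e : Ω ≃ Δ,
        (∀ u v, rY (e u) (e v) ↔ rX u v) ∧
        (∀ u, vY (e u) = vX u) ∧
        (∀ u v, rX u v → cY (e u) (e v) = cX u v)) ↔
    (∃ (β : Δ) (f : Equiv.Perm (TV Ω Δ)),
        (∀ u v, Tarc rX rY (f u) (f v) ↔ Tarc rX rY u v) ∧
        (∀ u, TvCol vX vY (f u) = TvCol vX vY u) ∧
        (∀ u v, Tarc rX rY u v →
          TaCol cX cY α β (f u) (f v) = TaCol cX cY α β u v) ∧
        f (.inl α) = .inr (.inl β) ∧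
        f (.inr (.inl β)) = .inr (.inr (.inl α)) ∧
        f (.inr (.inr (.inl α))) = .inl α) := by
  constructor
  · rintro ⟨e, hr, hv, hc⟩
    refine ⟨e α, ⟨?_, ?_, ?_, ?_⟩, ?_, ?_, ?_, ?_, ?_, ?_⟩
    · exact fun w => match w with
        | .inl x => .inr (.inl (e x))
        | .inr (.inl y) => .inr (.inr (.inl (e.symm y)))
        | .inr (.inr (.inl x)) => .inl x
        | .inr (.inr (.inr u)) => .inr (.inr (.inr u))
    · exact fun w => match w with
        | .inl x => .inr (.inr (.inl x))
        | .inr (.inl y) => .inl (e.symm y)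
        | .inr (.inr (.inl x)) => .inr (.inl (e x))
        | .inr (.inr (.inr u)) => .inr (.inr (.inr u))
    · rintro (x | y | x | u) <;> simp
    · rintro (x | y | x | u) <;> simp
    · rintro (x | y | x | u) (x' | y' | x' | u') <;>
        simp [Tarc, Equiv.coe_fn_mk, hr] <;>
        first
        | rfl
        | exact (hr _ _).symm.trans (by rw [e.apply_symm_apply, e.apply_symm_apply])
    · rintro (x | y | x | u) <;> simp [TvCol, Equiv.coe_fn_mk, hv] <;>
        exact (hv _).symm.trans (by rw [e.apply_symm_apply])
    · have hc' : ∀ y y', rY y y' → cX (e.symm y) (e.symm y') = cY y y' := by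
        intro y y' h
        have hrx : rX (e.symm y) (e.symm y') := by
          have h2 := hr (e.symm y) (e.symm y')
          rw [e.apply_symm_apply, e.apply_symm_apply] at h2
          exact h2.mp h
        have h3 := hc _ _ hrx
        rw [e.apply_symm_apply, e.apply_symm_apply] at h3
        exact h3.symm
      rintro (x | y | x | u) (x' | y' | x' | u') h <;>
        simp [Tarc, TaCol, Equiv.coe_fn_mk, EmbeddingLike.apply_eq_iff_eq,
          Equiv.symm_apply_eq] at h ⊢ <;>
        first
        | rfl
        | exact hc _ _ h
        | exact hc' _ _ h
        | exact congrArg Sum.inl (hc _ _ h)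
    · simp
    · simp
    · simp
  · rintro ⟨β, f, hT, hV, hC, h1, h2, h3⟩
    -- f fixes μ
    have hμ : f (.inr (.inr (.inr PUnit.unit))) = .inr (.inr (.inr PUnit.unit)) := by
      have := hV (.inr (.inr (.inr PUnit.unit)))
      rcases hfu : f (.inr (.inr (.inr PUnit.unit))) with x | y | x | u
      · rw [hfu] at this; simp [TvCol] at this
      · rw [hfu] at this; simp [TvCol] at this
      · rw [hfu] at this; simp [TvCol] at this
      · rfl
    -- f maps Ω into Δ
    have hmap : ∀ x : Ω, ∃ d : Δ, f (.inl x) = .inr (.inl d) := by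
      intro x
      have harc : Tarc rX rY (.inl α) (f (.inl x)) := by
        have := (hT (.inr (.inr (.inl α))) (.inl x)).mpr (by trivial)
        rwa [h3] at this
      have hcol : TaCol cX cY α β (.inl α) (f (.inl x)) = .inr 0 := by
        have := hC (.inr (.inr (.inl α))) (.inl x) (by trivial)
        rwa [h3] at this
      rcases hfx : f (.inl x) with y | d | y | u
      · rw [hfx] at hcol; simp [TaCol] at hcol
      · exact ⟨d, rfl⟩
      · rw [hfx] at harc; simp [Tarc] at harc
      · rw [hfx] at harc; simp [Tarc] at harc
    classical
    set e0 : Ω → Δ := fun x => (hmap x).choose with he0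
    have he0spec : ∀ x, f (.inl x) = .inr (.inl (e0 x)) := fun x => (hmap x).choose_spec
    have hinj : Function.Injective e0 := by
      intro a b hab
      have : f (.inl a) = f (.inl b) := by rw [he0spec, he0spec, hab]
      have := f.injective this
      exact Sum.inl.injEq a b ▸ (by injection this)
    have hbij : Function.Bijective e0 :=
      (Fintype.bijective_iff_injective_and_card e0).mpr ⟨hinj, by rw [hΩ, hΔ]⟩
    refine ⟨Equiv.ofBijective e0 hbij, ?_, ?_, ?_⟩
    · intro u v
      have := hT (.inl u) (.inl v)
      rw [he0spec, he0spec] at this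
      simpa [Tarc] using this
    · intro u
      have := hV (.inl u)
      rw [he0spec] at this
      simpa [TvCol] using this
    · intro u v h
      have := hC (.inl u) (.inl v) (by simpa [Tarc] using h)
      rw [he0spec, he0spec] at this
      simpa [TaCol] using this
end
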